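/- arXiv:2410.11998 — 4 statements merged into one kernel-verified Lean document; each statement's English description precedes it below -/
import Mathlib

section
/- Lemma 2 (sum of ratios with the denominator being a decayed sum of past numerators): Let 0 < β₂ < 1, ε > 0, and let (a_t)_{t∈ℕ⁺} be a nonnegative real sequence. Define b_t = Σ_{j=1}^t β₂^{t−j} a_j for all t ∈ ℕ⁺. Then for every T ∈ ℕ⁺, Σ_{j=1}^T a_j/(ε + b_j) ≤ ln(1 + b_T/ε) − T·ln(β₂). -/
/-!
Write `S t = ε + b t`, with `S 0 = ε`. The recursion `b (t+1) = β₂ b t + a (t+1)` and `β₂ ≤ 1` give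
`S (t+1) - a (t+1) ≥ β₂ S t`, and `x ≤ -log (1 - x)` turns this into
`a (t+1) / S (t+1) ≤ log S (t+1) - log S t - log β₂`, which telescopes.
-/

open Finset

def discountedSum (β : ℝ) (a : ℕ → ℝ) (t : ℕ) : ℝ :=
  ∑ j ∈ Icc 1 t, β ^ (t - j) * a j

lemma discountedSum_zero (β : ℝ) (a : ℕ → ℝ) : discountedSum β a 0 = 0 := by
  simp [discountedSum]

lemma discountedSum_succ (β : ℝ) (a : ℕ → ℝ) (t : ℕ) :
    discountedSum β a (t + 1) = β * discountedSum β a t + a (t + 1) := by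
  rw [discountedSum, discountedSum, sum_Icc_succ_top (Nat.le_add_left 1 t), mul_sum,
    Nat.sub_self, pow_zero, one_mul]
  congr 1
  refine sum_congr rfl fun j hj => ?_
  rw [Nat.sub_add_comm (mem_Icc.mp hj).2, pow_succ]
  ring

lemma discountedSum_nonneg {β : ℝ} (hβ : 0 ≤ β) {a : ℕ → ℝ} (ha : ∀ t, 1 ≤ t → 0 ≤ a t)
    (t : ℕ) : 0 ≤ discountedSum β a t :=
  sum_nonneg fun j hj => mul_nonneg (pow_nonneg hβ _) (ha j (mem_Icc.mp hj).1)

lemma div_le_log_sub_log {a s d : ℝ} (hs : 0 < s) (hd : 0 < d) (hda : d ≤ s - a) :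
    a / s ≤ Real.log s - Real.log d := by
  have hlog : Real.log (d / s) ≤ d / s - 1 := Real.log_le_sub_one_of_pos (by positivity)
  have hds : d / s - 1 ≤ -(a / s) := by
    rw [div_sub_one hs.ne', neg_div']
    exact div_le_div_of_nonneg_right (by linarith) hs.le
  rw [Real.log_div hd.ne' hs.ne'] at hlog
  linarith

lemma sum_div_le_log_sub_log {β : ℝ} (hβ : 0 < β) {a S : ℕ → ℝ} (hS : ∀ t, 0 < S t)
    (hstep : ∀ t, β * S t ≤ S (t + 1) - a (t + 1)) (T : ℕ) :
    ∑ t ∈ Icc 1 T, a t / S t ≤ Real.log (S T) - Real.log (S 0) - T * Real.log β := by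
  induction T with
  | zero => simp
  | succ T ih =>
    have hlast := div_le_log_sub_log (hS (T + 1)) (mul_pos hβ (hS T)) (hstep T)
    rw [Real.log_mul hβ.ne' (hS T).ne'] at hlast
    rw [sum_Icc_succ_top (Nat.le_add_left 1 T)]
    push_cast
    linarith

/-- Lemma 2: sum of ratios with the denominator being a decayed sum of past numerators. -/
theorem sum_ratios_decayed_denominator
    (β₂ ε : ℝ) (hβ₂0 : 0 < β₂) (hβ₂1 : β₂ < 1) (hε : 0 < ε)
    (a : ℕ → ℝ) (ha : ∀ t, 1 ≤ t → 0 ≤ a t)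
    (b : ℕ → ℝ) (hb : ∀ t, 1 ≤ t → b t = ∑ j ∈ Finset.Icc 1 t, β₂ ^ (t - j) * a j)
    (T : ℕ) (hT : 1 ≤ T) :
    ∑ j ∈ Finset.Icc 1 T, a j / (ε + b j)
      ≤ Real.log (1 + b T / ε) - T * Real.log β₂ := by
  have hD := discountedSum_nonneg hβ₂0.le ha
  have hS : ∀ t, 0 < ε + discountedSum β₂ a t := fun t => by linarith [hD t]
  have hstep : ∀ t, β₂ * (ε + discountedSum β₂ a t)
      ≤ ε + discountedSum β₂ a (t + 1) - a (t + 1) := fun t => by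
    have hβε : β₂ * ε ≤ ε := mul_le_of_le_one_left hε.le hβ₂1.le
    rw [discountedSum_succ]
    linarith
  have hsum := sum_div_le_log_sub_log hβ₂0 hS hstep T
  rw [discountedSum_zero, add_zero] at hsum
  have hbT : 1 + b T / ε = (ε + discountedSum β₂ a T) / ε := by
    rw [hb T hT, discountedSum]
    field_simp
  rw [hbT, Real.log_div (hS T).ne' hε.ne']
  calc ∑ j ∈ Icc 1 T, a j / (ε + b j)
      = ∑ j ∈ Icc 1 T, a j / (ε + discountedSum β₂ a j) :=
        sum_congr rfl fun j hj => by rw [hb j (mem_Icc.mp hj).1, discountedSum]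
    _ ≤ _ := hsum
end

section
/- Lemma 3 (averaged consensus error is bounded under i.i.d. sampling, no momentum): Under Assumptions 1–3 and the no-momentum decentralized Adam updates run for T iterations, almost surely (1/T) · Σ_{t=1}^T Σ_{i=1}^N Σ_{d=1}^D (∇_d F_i(x_i^{(t−1)}) − ∇_d F(x̄^{(t−1)}))² ≤ (2(1+λ²)α²NL²D / ((1−λ²)²(1−β₂))) · [ (1/T)·ln(1 + R²/(ε(1−β₂))) − ln(β₂) ]. -/
open Finset Matrix Polynomial MeasureTheory ProbabilityTheory

/-!
Almost surely every sampled gradient has coordinates bounded by `R - √ε`, since each `ξ t i` has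
law `𝒟`; on such a sample path the argument is deterministic and runs coordinatewise. The
consensus error `e t = x t - x̄ t` satisfies `e (t+1) = W e t + (u t - ū t)`, with `u t` the Adam
update. As `e t ⊥ 1` and `1` is a simple eigenvector of the symmetric `W`, `‖W e t‖ ≤ λ ‖e t‖`, and
Young's inequality with weight `(1 - λ²) / (1 + λ²)` gives
`‖e (t+1)‖² ≤ 2λ²/(1+λ²) ‖e t‖² + 2/(1-λ²) ‖u t‖²`; summing, with `e 0 = 0`,
`∑ ‖e t‖² ≤ 2(1+λ²)/(1-λ²)² ∑ ‖u t‖²`. Each squared Adam step is at most `α²/(1-β₂) · g²/(ε + v)`,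
and `g²/(ε + v t) ≤ log (ε + v t) - log (ε + v (t-1)) - log β₂` telescopes to the logarithmic bound.
Finally the Lipschitz bound on `∇F` turns consensus error into gradient discrepancy.
-/

section Adam

variable {α β ε : ℝ}

theorem adam_ratio_le_log_sub_log (hε : 0 < ε) (hβ0 : 0 < β) (hβ1 : β ≤ 1) {v a : ℝ}
    (hv : 0 ≤ v) (ha : 0 ≤ a) :
    a / (ε + (β * v + a)) ≤ Real.log (ε + (β * v + a)) - Real.log (ε + v) - Real.log β := by
  have hβv : β * (ε + v) ≤ ε + β * v := by nlinarith
  have hratio : a / (ε + (β * v + a)) ≤ 1 - β * (ε + v) / (ε + (β * v + a)) := by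
    rw [le_sub_iff_add_le, ← add_div, div_le_one (by positivity)]
    linarith
  have hlog := Real.one_sub_inv_le_log_of_pos (x := (ε + (β * v + a)) / (β * (ε + v)))
    (by positivity)
  rw [inv_div, Real.log_div (by positivity) (by positivity),
    Real.log_mul hβ0.ne' (by positivity)] at hlog
  linarith

theorem adam_second_moment_mem_Icc (hβ0 : 0 ≤ β) (hβ1 : β < 1) {a v : ℕ → ℝ} {G : ℝ}
    (ha : ∀ t, 0 ≤ a t) (haG : ∀ t, a t ≤ G) (hv0 : v 0 = 0)
    (hv : ∀ t, v (t + 1) = β * v t + a t) (t : ℕ) :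
    0 ≤ v t ∧ v t ≤ G / (1 - β) := by
  have hG : 0 ≤ G / (1 - β) := div_nonneg ((ha 0).trans (haG 0)) (by linarith)
  induction t with
  | zero => rw [hv0]; exact ⟨le_rfl, hG⟩
  | succ t ih =>
    rw [hv]
    refine ⟨add_nonneg (mul_nonneg hβ0 ih.1) (ha t), ?_⟩
    have hfix : β * (G / (1 - β)) + G = G / (1 - β) := by
      field_simp [(by linarith : (1 - β) ≠ 0)]
      ring
    nlinarith [haG t, mul_le_mul_of_nonneg_left ih.2 hβ0, hfix]

theorem adam_sum_ratio_le (hε : 0 < ε) (hβ0 : 0 < β) (hβ1 : β < 1) {a v : ℕ → ℝ} {G : ℝ}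
    (ha : ∀ t, 0 ≤ a t) (haG : ∀ t, a t ≤ G) (hv0 : v 0 = 0)
    (hv : ∀ t, v (t + 1) = β * v t + a t) (n : ℕ) :
    ∑ t ∈ range n, a t / (ε + v (t + 1))
      ≤ Real.log (1 + G / (ε * (1 - β))) - n * Real.log β := by
  have hv_mem := adam_second_moment_mem_Icc hβ0.le hβ1 ha haG hv0 hv
  calc ∑ t ∈ range n, a t / (ε + v (t + 1))
      _ ≤ ∑ t ∈ range n, (Real.log (ε + v (t + 1)) - Real.log (ε + v t) - Real.log β) := by
        refine sum_le_sum fun t _ => ?_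
        rw [hv t]
        exact adam_ratio_le_log_sub_log hε hβ0 hβ1.le (hv_mem t).1 (ha t)
      _ = Real.log ((ε + v n) / ε) - n * Real.log β := by
        rw [sum_sub_distrib, sum_range_sub (fun t => Real.log (ε + v t)), hv0, add_zero,
          Real.log_div (by linarith [(hv_mem n).1]) hε.ne']
        simp
      _ ≤ Real.log (1 + G / (ε * (1 - β))) - n * Real.log β := by
        gcongr
        · exact div_pos (by linarith [(hv_mem n).1]) hε
        · rw [add_div, div_self hε.ne', div_mul_eq_div_div_swap]
          gcongr
          exact (hv_mem n).2

theorem adam_step_sq_le (hβ0 : 0 ≤ β) (hβ1 : β < 1) (t : ℕ) {g v : ℝ} (hv : 0 ≤ ε + v) :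
    (-(α * √((1 - β ^ t) / (1 - β))) * (g / √(ε + v))) ^ 2
      ≤ α ^ 2 / (1 - β) * (g ^ 2 / (ε + v)) := by
  have hβt : 0 ≤ β ^ t := pow_nonneg hβ0 t
  have hβt1 : β ^ t ≤ 1 := pow_le_one₀ hβ0 hβ1.le
  rw [neg_mul, neg_sq, mul_pow, mul_pow, div_pow,
    Real.sq_sqrt (div_nonneg (by linarith) (by linarith)), Real.sq_sqrt hv]
  gcongr
  rw [mul_div_assoc']
  gcongr
  nlinarith [sq_nonneg α]

theorem adam_sum_sq_update_le (hε : 0 < ε) (hβ0 : 0 < β) (hβ1 : β < 1) {R : ℝ} {g v : ℕ → ℝ}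
    (hv0 : v 0 = 0) (hv : ∀ t, v (t + 1) = β * v t + g (t + 1) ^ 2) (hg : ∀ t, |g (t + 1)| ≤ R)
    (n : ℕ) :
    ∑ t ∈ range n, (-(α * √((1 - β ^ (t + 1)) / (1 - β))) * (g (t + 1) / √(ε + v (t + 1)))) ^ 2
      ≤ α ^ 2 / (1 - β) * (Real.log (1 + R ^ 2 / (ε * (1 - β))) - n * Real.log β) := by
  have hgR (t : ℕ) : g (t + 1) ^ 2 ≤ R ^ 2 := sq_le_sq.mpr ((hg t).trans (le_abs_self R))
  have hv_mem := adam_second_moment_mem_Icc hβ0.le hβ1 (fun t => sq_nonneg _) hgR hv0 hv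
  calc _ ≤ ∑ t ∈ range n, α ^ 2 / (1 - β) * (g (t + 1) ^ 2 / (ε + v (t + 1))) :=
        sum_le_sum fun t _ => adam_step_sq_le hβ0.le hβ1 _ (by linarith [(hv_mem (t + 1)).1])
    _ ≤ _ := by
      rw [← mul_sum]
      exact mul_le_mul_of_nonneg_left
        (adam_sum_ratio_le hε hβ0 hβ1 (fun t => sq_nonneg _) hgR hv0 hv n)
        (div_nonneg (sq_nonneg α) (by linarith))

end Adam

theorem add_sq_le_of_pos (a b : ℝ) {c : ℝ} (hc : 0 < c) :
    (a + b) ^ 2 ≤ (1 + c) * a ^ 2 + (1 + c⁻¹) * b ^ 2 := by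
  have hcc : c * c⁻¹ = 1 := mul_inv_cancel₀ hc.ne'
  refine le_of_mul_le_mul_left ?_ hc
  nlinarith [sq_nonneg (c * a - b)]

theorem one_sub_mul_sum_range_le {E U : ℕ → ℝ} {q : ℝ} (hE0 : E 0 = 0) (hE : ∀ t, 0 ≤ E t)
    (hrec : ∀ t, E (t + 1) ≤ q * E t + U t) (n : ℕ) :
    (1 - q) * ∑ t ∈ range n, E t ≤ ∑ t ∈ range n, U t := by
  have hshift : ∑ t ∈ range (n + 1), E t = ∑ t ∈ range n, E (t + 1) := by
    rw [sum_range_succ', hE0, add_zero]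
  have hstep : ∑ t ∈ range n, E (t + 1) ≤ q * ∑ t ∈ range n, E t + ∑ t ∈ range n, U t := by
    rw [mul_sum, ← sum_add_distrib]
    exact sum_le_sum fun t _ => hrec t
  have hmono : ∑ t ∈ range n, E t ≤ ∑ t ∈ range (n + 1), E t := by
    rw [sum_range_succ]
    linarith [hE n]
  linarith

section Consensus

variable {ι : Type*} [Fintype ι]

noncomputable def deviation (z : ι → ℝ) : ι → ℝ := fun i => z i - (Fintype.card ι : ℝ)⁻¹ * ∑ j, z j

theorem sum_deviation (z : ι → ℝ) : ∑ i, deviation z i = 0 := by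
  rcases isEmpty_or_nonempty ι with hι | hι
  · simp
  · simp [deviation, sum_sub_distrib, Fintype.card_ne_zero]

theorem deviation_const (c : ℝ) : deviation (fun _ : ι => c) = 0 := by
  funext i
  have : Nonempty ι := ⟨i⟩
  simp [deviation, Fintype.card_ne_zero]

theorem sum_sq_deviation_le (z : ι → ℝ) : ∑ i, deviation z i ^ 2 ≤ ∑ i, z i ^ 2 := by
  set m := (Fintype.card ι : ℝ)⁻¹ * ∑ j, z j
  have hterm (i : ι) : z i ^ 2 = deviation z i ^ 2 + 2 * m * deviation z i + m ^ 2 := by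
    rw [show deviation z i = z i - m from rfl]
    ring
  have hsplit : ∑ i, z i ^ 2 = ∑ i, deviation z i ^ 2 + 2 * m * ∑ i, deviation z i
      + Fintype.card ι * m ^ 2 := by
    rw [sum_congr rfl fun i _ => hterm i, sum_add_distrib, sum_add_distrib, ← mul_sum,
      sum_const, card_univ, nsmul_eq_mul]
  rw [hsplit, sum_deviation]
  nlinarith [sq_nonneg m, (Fintype.card ι).cast_nonneg (α := ℝ)]

theorem deviation_mulVec_add {W : Matrix ι ι ℝ} (hrow : ∀ i, ∑ j, W i j = 1)
    (hcol : ∀ j, ∑ i, W i j = 1) (y u : ι → ℝ) :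
    deviation (W *ᵥ y + u) = W *ᵥ deviation y + deviation u := by
  have hsum : ∑ i, (W *ᵥ y) i = ∑ j, y j := by
    simp only [mulVec, dotProduct]
    rw [sum_comm]
    simp [← sum_mul, hcol]
  funext i
  simp only [deviation, Pi.add_apply, sum_add_distrib, hsum]
  simp only [mulVec, dotProduct, deviation, mul_sub, sum_sub_distrib, ← sum_mul, hrow]
  ring

theorem sum_sq_deviation_mulVec_add_le {W : Matrix ι ι ℝ} (hrow : ∀ i, ∑ j, W i j = 1)
    (hcol : ∀ j, ∑ i, W i j = 1) {lam : ℝ} (hlam : lam ^ 2 < 1)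
    (hcontract : ∀ z : ι → ℝ, ∑ i, z i = 0 → ∑ i, (W *ᵥ z) i ^ 2 ≤ lam ^ 2 * ∑ i, z i ^ 2)
    (y u : ι → ℝ) :
    ∑ i, deviation (W *ᵥ y + u) i ^ 2
      ≤ 2 * lam ^ 2 / (1 + lam ^ 2) * ∑ i, deviation y i ^ 2
        + 2 / (1 - lam ^ 2) * ∑ i, u i ^ 2 := by
  have hlam' : 0 < 1 - lam ^ 2 := by linarith
  set c := (1 - lam ^ 2) / (1 + lam ^ 2)
  have hc : 0 < c := by positivity
  calc ∑ i, deviation (W *ᵥ y + u) i ^ 2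
      _ ≤ ∑ i, ((1 + c) * (W *ᵥ deviation y) i ^ 2 + (1 + c⁻¹) * deviation u i ^ 2) := by
        rw [deviation_mulVec_add hrow hcol]
        exact sum_le_sum fun i _ => add_sq_le_of_pos _ _ hc
      _ = (1 + c) * ∑ i, (W *ᵥ deviation y) i ^ 2 + (1 + c⁻¹) * ∑ i, deviation u i ^ 2 := by
        rw [sum_add_distrib, mul_sum, mul_sum]
      _ ≤ (1 + c) * (lam ^ 2 * ∑ i, deviation y i ^ 2) + (1 + c⁻¹) * ∑ i, u i ^ 2 := by
        gcongr (1 + c) * ?_ + (1 + c⁻¹) * ?_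
        · exact hcontract _ (sum_deviation y)
        · exact sum_sq_deviation_le u
      _ = _ := by
        simp only [c]
        field_simp
        ring

theorem sum_range_sum_sq_deviation_le {W : Matrix ι ι ℝ}
    (hrow : ∀ i, ∑ j, W i j = 1) (hcol : ∀ j, ∑ i, W i j = 1) {lam : ℝ} (hlam : lam ^ 2 < 1)
    (hcontract : ∀ z : ι → ℝ, ∑ i, z i = 0 → ∑ i, (W *ᵥ z) i ^ 2 ≤ lam ^ 2 * ∑ i, z i ^ 2)
    {y : ℕ → ι → ℝ} {c : ℝ} (hy0 : y 0 = fun _ => c) (T : ℕ) :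
    ∑ t ∈ range T, ∑ i, deviation (y t) i ^ 2
      ≤ 2 * (1 + lam ^ 2) / (1 - lam ^ 2) ^ 2
        * ∑ t ∈ range T, ∑ i, (y (t + 1) i - (W *ᵥ y t) i) ^ 2 := by
  have hlam' : 0 < 1 - lam ^ 2 := by linarith
  have hstep (t : ℕ) : ∑ i, deviation (y (t + 1)) i ^ 2
      ≤ 2 * lam ^ 2 / (1 + lam ^ 2) * ∑ i, deviation (y t) i ^ 2
        + 2 / (1 - lam ^ 2) * ∑ i, (y (t + 1) i - (W *ᵥ y t) i) ^ 2 := by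
    have hy : y (t + 1) = W *ᵥ y t + fun i => y (t + 1) i - (W *ᵥ y t) i := by
      funext i
      simp
    conv_lhs => rw [hy]
    exact sum_sq_deviation_mulVec_add_le hrow hcol hlam hcontract _ _
  have hrec := one_sub_mul_sum_range_le (E := fun t => ∑ i, deviation (y t) i ^ 2)
    (by simp [hy0, deviation_const]) (fun t => by positivity) hstep T
  have h1q : 1 - 2 * lam ^ 2 / (1 + lam ^ 2) = (1 - lam ^ 2) / (1 + lam ^ 2) := by
    field_simp
    ring
  rw [← mul_sum, h1q, ← le_div_iff₀' (by positivity)] at hrec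
  refine hrec.trans_eq ?_
  field_simp

end Consensus

namespace Matrix.IsHermitian

variable {n : Type*} [Fintype n] [DecidableEq n] {A : Matrix n n ℝ}

theorem map_eigenvalues_eq_of_charpoly_eq_prod (hA : A.IsHermitian) {ι : Type*} [Fintype ι]
    {eig : ι → ℝ} (heig : A.charpoly = ∏ i, (X - C (eig i))) :
    univ.val.map hA.eigenvalues = univ.val.map eig := by
  have h := hA.roots_charpoly_eq_eigenvalues
  rw [heig, roots_prod _ _ (prod_ne_zero_iff.mpr fun i _ => X_sub_C_ne_zero (eig i))] at h
  simpa [RCLike.ofReal_real_eq_id] using h.symm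

theorem sum_sq_mulVec_le (hA : A.IsHermitian) {u z : n → ℝ} {lam : ℝ}
    (hu : A *ᵥ u = u) (hu0 : u ≠ 0)
    (hsimple : ∀ k k', hA.eigenvalues k = 1 → hA.eigenvalues k' = 1 → k = k')
    (hlam : ∀ k, hA.eigenvalues k ≠ 1 → |hA.eigenvalues k| ≤ lam) (huz : u ⬝ᵥ z = 0) :
    ∑ i, (A *ᵥ z) i ^ 2 ≤ lam ^ 2 * ∑ i, z i ^ 2 := by
  set b := hA.eigenvectorBasis
  set μ := hA.eigenvalues
  set c : (n → ℝ) → n → ℝ := fun w k => (b k).ofLp ⬝ᵥ w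
  have parseval (w w' : n → ℝ) : ∑ k, c w k * c w' k = w ⬝ᵥ w' := by
    have := b.sum_inner_mul_inner (WithLp.toLp 2 w) (WithLp.toLp 2 w')
    simp only [EuclideanSpace.inner_eq_star_dotProduct, star_trivial] at this
    rw [dotProduct_comm w w', ← this]
    simp_rw [c, dotProduct_comm w' (b _).ofLp]
  have sum_sq (w : n → ℝ) : ∑ i, w i ^ 2 = ∑ k, c w k ^ 2 := by
    simpa only [dotProduct, ← sq] using (parseval w w).symm
  have coeff_mulVec (w : n → ℝ) (k : n) : c (A *ᵥ w) k = μ k * c w k := by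
    have hAT : Aᵀ = A := by simpa using hA.eq
    have hvecMul : (b k).ofLp ᵥ* A = A *ᵥ (b k).ofLp := by rw [← vecMul_transpose, hAT]
    simp only [c]
    rw [dotProduct_mulVec, hvecMul, hA.mulVec_eigenvectorBasis, smul_dotProduct, smul_eq_mul]
  have hcu : ∀ k, μ k ≠ 1 → c u k = 0 := by
    intro k hk
    have h := coeff_mulVec u k
    rw [hu] at h
    have : (1 - μ k) * c u k = 0 := by linarith
    exact (mul_eq_zero.mp this).resolve_left (sub_ne_zero.mpr (Ne.symm hk))
  -- `u` has a single nonzero coefficient, at the simple eigenvalue `1`, so `u ⬝ᵥ z = 0` kills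
  -- that coefficient of `z`.
  have hcz : ∀ k, μ k = 1 → c z k = 0 := by
    intro k hk
    have hcu' : ∀ k', k' ≠ k → c u k' = 0 := fun k' hk' => hcu k' fun h => hk' (hsimple _ _ h hk)
    have hprod : c u k * c z k = 0 := by
      rw [← huz, ← parseval, sum_eq_single k (fun k' _ hk' => by rw [hcu' k' hk', zero_mul])
        (by simp)]
    refine (mul_eq_zero.mp hprod).resolve_left fun huk => hu0 (dotProduct_self_eq_zero.mp ?_)
    rw [← parseval, sum_eq_zero]
    intro k' _
    rcases eq_or_ne k' k with rfl | hk'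
    · rw [huk, zero_mul]
    · rw [hcu' k' hk', zero_mul]
  calc ∑ i, (A *ᵥ z) i ^ 2
      _ = ∑ k, (μ k * c z k) ^ 2 := by rw [sum_sq]; simp only [coeff_mulVec]
      _ ≤ ∑ k, lam ^ 2 * c z k ^ 2 := by
        refine sum_le_sum fun k _ => ?_
        by_cases hk : μ k = 1
        · simp [hcz k hk]
        · rw [mul_pow, ← sq_abs (μ k)]
          gcongr
          exact hlam k hk
      _ = lam ^ 2 * ∑ i, z i ^ 2 := by rw [sum_sq, mul_sum]

theorem sum_sq_mulVec_le_of_charpoly (hA : A.IsHermitian) {ι : Type*} [Fintype ι]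
    {eig : ι → ℝ} (heig : A.charpoly = ∏ i, (X - C (eig i))) {u z : n → ℝ} {lam : ℝ}
    (hu : A *ᵥ u = u) (hu0 : u ≠ 0) (hsimple : ∀ i i', eig i = 1 → eig i' = 1 → i = i')
    (hlam : ∀ i, eig i ≠ 1 → |eig i| ≤ lam) (huz : u ⬝ᵥ z = 0) :
    ∑ i, (A *ᵥ z) i ^ 2 ≤ lam ^ 2 * ∑ i, z i ^ 2 := by
  have hmap := hA.map_eigenvalues_eq_of_charpoly_eq_prod heig
  have hcard :
      #(univ.filter fun k => hA.eigenvalues k = 1) = #(univ.filter fun i => eig i = 1) := by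
    have := congrArg (Multiset.countP (· = (1 : ℝ))) hmap
    rwa [Multiset.countP_map, Multiset.countP_map] at this
  refine hA.sum_sq_mulVec_le hu hu0 (fun k k' hk hk' => ?_) (fun k hk => ?_) huz
  · have hle : #(univ.filter fun k => hA.eigenvalues k = 1) ≤ 1 := by
      rw [hcard, card_le_one]
      exact fun i hi i' hi' => hsimple i i' (mem_filter.mp hi).2 (mem_filter.mp hi').2
    exact card_le_one.mp hle k (by simpa using hk) k' (by simpa using hk')
  · obtain ⟨i, -, hi⟩ := Multiset.mem_map.mp (hmap ▸ Multiset.mem_map_of_mem _ (mem_univ_val k))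
    rw [← hi] at hk ⊢
    exact hlam i hk

end Matrix.IsHermitian

theorem sum_sq_mulVec_le_of_antitone_eigenvalues {N : ℕ} (hN : 1 < N)
    {W : Matrix (Fin N) (Fin N) ℝ} (hWsymm : W.IsSymm) (hWrow : ∀ i, ∑ j, W i j = 1)
    {eig : Fin N → ℝ} (heig : W.charpoly = ∏ i, (X - C (eig i))) (hanti : Antitone eig)
    (heig1 : eig ⟨0, Nat.zero_lt_of_lt hN⟩ = 1) (heig2 : eig ⟨1, hN⟩ < 1) {z : Fin N → ℝ}
    (hz : ∑ i, z i = 0) :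
    ∑ i, (W *ᵥ z) i ^ 2
      ≤ max |eig ⟨1, hN⟩| |eig ⟨N - 1, Nat.sub_one_lt_of_lt hN⟩| ^ 2 * ∑ i, z i ^ 2 := by
  have hN0 : 0 < N := Nat.zero_lt_of_lt hN
  have hpos (k : Fin N) (hk : k ≠ ⟨0, hN0⟩) : (⟨1, hN⟩ : Fin N) ≤ k :=
    Fin.mk_le_mk.mpr (Nat.one_le_iff_ne_zero.mpr fun h => hk (Fin.ext h))
  have hzero (k : Fin N) (hk : eig k = 1) : k = ⟨0, hN0⟩ :=
    by_contra fun h => ((hanti (hpos k h)).trans_lt heig2).ne hk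
  refine (isHermitian_iff_isSymm.mpr hWsymm).sum_sq_mulVec_le_of_charpoly heig (u := 1)
    (by funext i; simp [mulVec, dotProduct, hWrow]) (fun h => by simpa using congrFun h ⟨0, hN0⟩)
    (fun k k' hk hk' => (hzero k hk).trans (hzero k' hk').symm) (fun k hk => ?_)
    (by rw [one_dotProduct, hz])
  have hk0 : k ≠ ⟨0, hN0⟩ := fun h => hk (h ▸ heig1)
  have hlast : k ≤ ⟨N - 1, Nat.sub_one_lt_of_lt hN⟩ := Fin.mk_le_mk.mpr (by omega)
  rw [max_comm]
  exact abs_le_max_abs_abs (hanti hlast) (hanti (hpos k hk0))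

theorem sum_sq_sub_le_of_norm_sub_le {m n : Type*} [Fintype m] [Fintype n]
    {f : EuclideanSpace ℝ m → EuclideanSpace ℝ n} {L : ℝ}
    (hf : ∀ x y, ‖f x - f y‖ ≤ L * ‖x - y‖) (x y : EuclideanSpace ℝ m) :
    ∑ k, (f x k - f y k) ^ 2 ≤ L ^ 2 * ∑ k, (x k - y k) ^ 2 := by
  have h := pow_le_pow_left₀ (norm_nonneg _) (hf x y) 2
  rw [mul_pow, EuclideanSpace.norm_sq_eq, EuclideanSpace.norm_sq_eq] at h
  simpa only [PiLp.sub_apply, Real.norm_eq_abs, sq_abs] using h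

theorem sub_smul_sum_apply_eq_deviation {N D : ℕ} (x : Fin N → EuclideanSpace ℝ (Fin D))
    (i : Fin N) (d : Fin D) :
    x i d - ((N : ℝ)⁻¹ • ∑ j, x j) d = deviation (fun j => x j d) i := by
  simp [deviation]

theorem sum_sq_gradient_sub_le_sum_sq_deviation {N D : ℕ} {L : ℝ}
    {gradF : EuclideanSpace ℝ (Fin D) → EuclideanSpace ℝ (Fin D)}
    (hLip : ∀ x y, ‖gradF x - gradF y‖ ≤ L * ‖x - y‖) (x : Fin N → EuclideanSpace ℝ (Fin D)) :
    ∑ i, ∑ d, (gradF (x i) d - gradF ((N : ℝ)⁻¹ • ∑ j, x j) d) ^ 2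
      ≤ L ^ 2 * ∑ d, ∑ i, deviation (fun j => x j d) i ^ 2 := by
  rw [sum_comm (s := univ) (t := univ) (f := fun d i => deviation (fun j => x j d) i ^ 2), mul_sum]
  refine sum_le_sum fun i _ => ?_
  simpa only [sub_smul_sum_apply_eq_deviation] using
    sum_sq_sub_le_of_norm_sub_le hLip (x i) ((N : ℝ)⁻¹ • ∑ j, x j)

theorem one_div_mul_sub_mul_le (T : ℕ) (b : ℝ) {a : ℝ} (ha : a ≤ 0) :
    1 / (T : ℝ) * (b - T * a) ≤ 1 / T * b - a := by
  rcases eq_or_ne T 0 with rfl | hT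
  · simpa using ha
  · rw [mul_sub, ← mul_assoc, one_div_mul_cancel (Nat.cast_ne_zero.mpr hT), one_mul]

theorem consensus_error_bound_of_bounded_gradients {N D : ℕ} (T : ℕ)
    {W : Matrix (Fin N) (Fin N) ℝ} (hWrow : ∀ i, ∑ j, W i j = 1) (hWcol : ∀ j, ∑ i, W i j = 1)
    {lam : ℝ} (hlam : lam ^ 2 < 1)
    (hcontract : ∀ z : Fin N → ℝ, ∑ i, z i = 0 → ∑ i, (W *ᵥ z) i ^ 2 ≤ lam ^ 2 * ∑ i, z i ^ 2)
    {α β₂ ε L R : ℝ} (hε : 0 < ε) (hβ₂0 : 0 < β₂) (hβ₂1 : β₂ < 1)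
    {gradF : EuclideanSpace ℝ (Fin D) → EuclideanSpace ℝ (Fin D)}
    (hLip : ∀ x y, ‖gradF x - gradF y‖ ≤ L * ‖x - y‖)
    {x0 : EuclideanSpace ℝ (Fin D)} {x : ℕ → Fin N → EuclideanSpace ℝ (Fin D)}
    {v : ℕ → Fin N → Fin D → ℝ} {g : ℕ → Fin N → EuclideanSpace ℝ (Fin D)}
    (hx0 : ∀ i, x 0 i = x0) (hv0 : ∀ i d, v 0 i d = 0) (hg : ∀ t i d, |g (t + 1) i d| ≤ R)
    (hv : ∀ t i d, v (t + 1) i d = β₂ * v t i d + g (t + 1) i d ^ 2)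
    (hx : ∀ t i d, x (t + 1) i d
      = -(α * √((1 - β₂ ^ (t + 1)) / (1 - β₂))) * (g (t + 1) i d / √(ε + v (t + 1) i d))
        + ∑ j, W i j * x t j d) :
    (1 / (T : ℝ)) * ∑ t ∈ range T, ∑ i, ∑ d,
        (gradF (x t i) d - gradF ((N : ℝ)⁻¹ • ∑ j, x t j) d) ^ 2
      ≤ (2 * (1 + lam ^ 2) * α ^ 2 * N * L ^ 2 * D / ((1 - lam ^ 2) ^ 2 * (1 - β₂)))
        * ((1 / (T : ℝ)) * Real.log (1 + R ^ 2 / (ε * (1 - β₂))) - Real.log β₂) := by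
  have hlam' : 0 < 1 - lam ^ 2 := by linarith
  have hβ₂' : 0 < 1 - β₂ := by linarith
  set B := Real.log (1 + R ^ 2 / (ε * (1 - β₂)))
  set Q := α ^ 2 / (1 - β₂) * (B - T * Real.log β₂)
  set K := 2 * (1 + lam ^ 2) / (1 - lam ^ 2) ^ 2
  have hupdate (d : Fin D) :
      ∑ t ∈ range T, ∑ i, (x (t + 1) i d - (W *ᵥ fun j => x t j d) i) ^ 2 ≤ N * Q := by
    rw [sum_comm]
    calc _ ≤ ∑ _i : Fin N, Q := sum_le_sum fun i _ => ?_
      _ = N * Q := by simp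
    have hupd (t : ℕ) : x (t + 1) i d - (W *ᵥ fun j => x t j d) i
        = -(α * √((1 - β₂ ^ (t + 1)) / (1 - β₂))) * (g (t + 1) i d / √(ε + v (t + 1) i d)) := by
      rw [hx]
      simp [mulVec, dotProduct]
    simp only [hupd]
    exact adam_sum_sq_update_le (g := fun t => g t i d) (v := fun t => v t i d) hε hβ₂0 hβ₂1
      (hv0 i d) (fun t => hv t i d) (fun t => hg t i d) T
  have hconsensus (d : Fin D) :
      ∑ t ∈ range T, ∑ i, deviation (fun j => x t j d) i ^ 2 ≤ K * (N * Q) := by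
    refine (sum_range_sum_sq_deviation_le hWrow hWcol hlam hcontract (y := fun t j => x t j d)
      (c := x0 d) (by funext j; simp [hx0]) T).trans ?_
    gcongr
    exact hupdate d
  have hLHS : ∑ t ∈ range T, ∑ i, ∑ d, (gradF (x t i) d - gradF ((N : ℝ)⁻¹ • ∑ j, x t j) d) ^ 2
      ≤ L ^ 2 * (D * (K * (N * Q))) := by
    calc _ ≤ ∑ t ∈ range T, L ^ 2 * ∑ d, ∑ i, deviation (fun j => x t j d) i ^ 2 :=
          sum_le_sum fun t _ => sum_sq_gradient_sub_le_sum_sq_deviation hLip (x t)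
      _ = L ^ 2 * ∑ d, ∑ t ∈ range T, ∑ i, deviation (fun j => x t j d) i ^ 2 := by
        rw [← mul_sum, sum_comm]
      _ ≤ L ^ 2 * ∑ _d : Fin D, K * (N * Q) := by gcongr with d; exact hconsensus d
      _ = L ^ 2 * (D * (K * (N * Q))) := by simp
  calc _ ≤ 1 / (T : ℝ) * (L ^ 2 * (D * (K * (N * Q)))) := by gcongr
    _ = (2 * (1 + lam ^ 2) * α ^ 2 * N * L ^ 2 * D / ((1 - lam ^ 2) ^ 2 * (1 - β₂)))
          * (1 / (T : ℝ) * (B - T * Real.log β₂)) := by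
        simp only [K, Q]
        field_simp
    _ ≤ _ := mul_le_mul_of_nonneg_left (one_div_mul_sub_mul_le T B
        (Real.log_nonpos hβ₂0.le hβ₂1.le)) (div_nonneg (by positivity) (by positivity))

/-- Lemma 3: the averaged consensus error is bounded under i.i.d. sampling (no momentum). -/
theorem consensus_error_bound_no_momentum
    {Ω : Type} [MeasurableSpace Ω] (μ : Measure Ω)
    {Ξ : Type} [MeasurableSpace Ξ] (𝒟 : Measure Ξ)
    (N D T : ℕ) (hN : 1 < N)
    (α β₂ ε L R : ℝ)
    (hε : 0 < ε) (hβ₂0 : 0 < β₂) (hβ₂1 : β₂ < 1)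
    (gradℓ : EuclideanSpace ℝ (Fin D) → Ξ → EuclideanSpace ℝ (Fin D))
    (gradF : EuclideanSpace ℝ (Fin D) → EuclideanSpace ℝ (Fin D))
    -- Assumption 1
    (hLip : ∀ x y, ‖gradF x - gradF y‖ ≤ L * ‖x - y‖)
    -- Assumption 2
    (hbound : ∀ᵐ ξ ∂𝒟, ∀ x (d : Fin D), |gradℓ x ξ d| ≤ R - Real.sqrt ε)
    -- i.i.d. samples
    (ξ : ℕ → Fin N → Ω → Ξ)
    (hξmeas : ∀ t i, Measurable (ξ t i))
    (hξdist : ∀ t i, Measure.map (ξ t i) μ = 𝒟)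
    -- Assumption 3
    (W : Matrix (Fin N) (Fin N) ℝ)
    (hWsymm : W.IsSymm)
    (hWrow : ∀ i, ∑ j, W i j = 1)
    (hWcol : ∀ j, ∑ i, W i j = 1)
    (eig : Fin N → ℝ)
    (heig : W.charpoly = ∏ i, (Polynomial.X - Polynomial.C (eig i)))
    (hanti : Antitone eig)
    (heig1 : eig ⟨0, by omega⟩ = 1)
    (heig2 : eig ⟨1, hN⟩ < 1)
    (heiglast : -1 < eig ⟨N - 1, by omega⟩)
    (lam : ℝ) (hlam : lam = max |eig ⟨1, hN⟩| |eig ⟨N - 1, by omega⟩|)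
    -- the no-momentum decentralized Adam iterates
    (x0 : EuclideanSpace ℝ (Fin D))
    (x : ℕ → Fin N → Ω → EuclideanSpace ℝ (Fin D))
    (v : ℕ → Fin N → Ω → Fin D → ℝ)
    (g : ℕ → Fin N → Ω → EuclideanSpace ℝ (Fin D))
    (hx0 : ∀ i ω, x 0 i ω = x0)
    (hv0 : ∀ i ω d, v 0 i ω d = 0)
    (hg : ∀ t i ω, g (t + 1) i ω = gradℓ (x t i ω) (ξ (t + 1) i ω))
    (hv : ∀ t i ω (d : Fin D), v (t + 1) i ω d = β₂ * v t i ω d + (g (t + 1) i ω d) ^ 2)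
    (hx : ∀ t i ω (d : Fin D),
      x (t + 1) i ω d
        = -(α * Real.sqrt ((1 - β₂ ^ (t + 1)) / (1 - β₂)))
              * (g (t + 1) i ω d / Real.sqrt (ε + v (t + 1) i ω d))
            + ∑ j, W i j * x t j ω d) :
    ∀ᵐ ω ∂μ,
      (1 / (T : ℝ)) * ∑ t ∈ Finset.range T, ∑ i, ∑ d : Fin D,
          (gradF (x t i ω) d - gradF ((N : ℝ)⁻¹ • ∑ j, x t j ω) d) ^ 2
        ≤ (2 * (1 + lam ^ 2) * α ^ 2 * N * L ^ 2 * D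
              / ((1 - lam ^ 2) ^ 2 * (1 - β₂)))
            * ((1 / (T : ℝ)) * Real.log (1 + R ^ 2 / (ε * (1 - β₂))) - Real.log β₂) := by
  have hlam_sq : lam ^ 2 < 1 := by
    have h1N : (⟨1, hN⟩ : Fin N) ≤ ⟨N - 1, by omega⟩ := Fin.mk_le_mk.mpr (by omega)
    rw [sq_lt_one_iff_abs_lt_one, hlam, abs_of_nonneg (le_max_of_le_left (abs_nonneg _))]
    exact max_lt (abs_lt.mpr ⟨heiglast.trans_le (hanti h1N), heig2⟩)
      (abs_lt.mpr ⟨heiglast, (hanti h1N).trans_lt heig2⟩)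
  have hcontract (z : Fin N → ℝ) (hz : ∑ i, z i = 0) :
      ∑ i, (W *ᵥ z) i ^ 2 ≤ lam ^ 2 * ∑ i, z i ^ 2 :=
    hlam ▸ sum_sq_mulVec_le_of_antitone_eigenvalues hN hWsymm hWrow heig hanti heig1 heig2 hz
  have hsamples : ∀ᵐ ω ∂μ, ∀ t i x d, |gradℓ x (ξ t i ω) d| ≤ R - √ε := by
    refine ae_all_iff.mpr fun t => ae_all_iff.mpr fun i => ?_
    exact ae_of_ae_map (hξmeas t i).aemeasurable (hξdist t i ▸ hbound)
  filter_upwards [hsamples] with ω hω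
  exact consensus_error_bound_of_bounded_gradients T hWrow hWcol hlam_sq hcontract hε hβ₂0 hβ₂1
    hLip (v := fun t i => v t i ω) (g := fun t i => g t i ω) (fun i => hx0 i ω)
    (fun i d => hv0 i ω d)
    (fun t i d => hg t i ω ▸ (hω _ _ _ d).trans (sub_le_self _ (Real.sqrt_nonneg ε)))
    (fun t i d => hv t i ω d) (fun t i d => hx t i ω d)
end

section
/- Lemma 5 (sum of ratios of the square of a decayed sum and a decayed sum of squares): Let 0 < β₁ < β₂ ≤ 1, ε > 0, and let (a_n)_{n∈ℕ⁺} be a real sequence. Define b_n = Σ_{j=1}^n β₂^{n−j} a_j² and c_n = Σ_{j=1}^n β₁^{n−j} a_j. Then for every n ∈ ℕ⁺, Σ_{j=1}^n c_j²/(ε + b_j) ≤ (1/((1−β₁)(1−β₁/β₂))) · [ ln(1 + b_n/ε) − n·ln(β₂) ]. -/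
/-! With `D_β(x)_n = ∑_{j ≤ n} β^(n-j) x_j` we have `b = D_β₂(a²)` and `c = D_β₁(a)`.
Cauchy–Schwarz against the weights `β₁^(n-j)` gives `c_n² ≤ (1 - β₁)⁻¹ D_β₁(a²)_n`, and since
`ε + b` grows at least by the factor `β₂^(n-j)` from `j` to `n`, this yields
`c_n² / (ε + b_n) ≤ (1 - β₁)⁻¹ D_q(y)_n` with `q = β₁ / β₂` and `y_j = a_j² / (ε + b_j)`.
Summing over `n`, `∑ D_q(y) ≤ (1 - q)⁻¹ ∑ y`, and `∑ y` is bounded by a telescoping sum of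
logarithms coming from `1 - t⁻¹ ≤ log t`. -/

open Finset

noncomputable def decayedSum (β : ℝ) (x : ℕ → ℝ) (n : ℕ) : ℝ :=
  ∑ j ∈ Icc 1 n, β ^ (n - j) * x j

namespace decayedSum

variable {β ε : ℝ} {x : ℕ → ℝ} {n : ℕ}

@[simp]
theorem zero : decayedSum β x 0 = 0 := by
  simp [decayedSum]

theorem succ (β : ℝ) (x : ℕ → ℝ) (n : ℕ) :
    decayedSum β x (n + 1) = β * decayedSum β x n + x (n + 1) := by
  rw [decayedSum, sum_Icc_succ_top (by omega), decayedSum, mul_sum, Nat.sub_self, pow_zero,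
    one_mul]
  congr 1
  refine sum_congr rfl fun j hj => ?_
  rw [Nat.sub_add_comm (mem_Icc.1 hj).2, pow_succ']
  ring

theorem nonneg (hβ : 0 ≤ β) (hx : ∀ j, 0 ≤ x j) : 0 ≤ decayedSum β x n :=
  sum_nonneg fun j _ => mul_nonneg (pow_nonneg hβ _) (hx j)

theorem pow_mul_le (hβ : 0 ≤ β) (hx : ∀ j, 0 ≤ x j) {m : ℕ} (hmn : m ≤ n) :
    β ^ (n - m) * decayedSum β x m ≤ decayedSum β x n := by
  induction n, hmn using Nat.le_induction with
  | base => simp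
  | succ n hmn ih =>
    rw [succ, Nat.sub_add_comm hmn, pow_succ', mul_assoc]
    nlinarith [mul_le_mul_of_nonneg_left ih hβ, hx (n + 1)]

theorem pow_mul_const_add_le (hβ0 : 0 ≤ β) (hβ1 : β ≤ 1) (hε : 0 ≤ ε) (hx : ∀ j, 0 ≤ x j) {m : ℕ}
    (hmn : m ≤ n) : β ^ (n - m) * (ε + decayedSum β x m) ≤ ε + decayedSum β x n := by
  rw [mul_add]
  gcongr
  · exact mul_le_of_le_one_left hε (pow_le_one₀ hβ0 hβ1)
  · exact pow_mul_le hβ0 hx hmn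

theorem const_one_le (hβ0 : 0 ≤ β) (hβ1 : β < 1) : decayedSum β (fun _ => 1) n ≤ (1 - β)⁻¹ := by
  induction n with
  | zero => simp [hβ1.le]
  | succ n ih =>
    have h : β * (1 - β)⁻¹ + 1 = (1 - β)⁻¹ := by field_simp [(sub_pos.2 hβ1).ne']; ring
    rw [succ]
    nlinarith [mul_le_mul_of_nonneg_left ih hβ0]

theorem sq_le (hβ0 : 0 ≤ β) (hβ1 : β < 1) :
    decayedSum β x n ^ 2 ≤ (1 - β)⁻¹ * decayedSum β (x · ^ 2) n := by
  have hcs := sum_sq_le_sum_mul_sum_of_sq_le_mul (Icc 1 n) (r := fun j => β ^ (n - j) * x j)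
    (f := fun j => β ^ (n - j)) (g := fun j => β ^ (n - j) * x j ^ 2)
    (fun j _ => pow_nonneg hβ0 _) (fun j _ => by positivity) (fun j _ => (by ring : _ = _).le)
  refine hcs.trans (mul_le_mul_of_nonneg_right ?_ (nonneg hβ0 fun j => sq_nonneg (x j)))
  simpa [decayedSum] using const_one_le (n := n) hβ0 hβ1

theorem one_sub_mul_sum_add (β : ℝ) (x : ℕ → ℝ) (n : ℕ) :
    (1 - β) * ∑ j ∈ Icc 1 n, decayedSum β x j + β * decayedSum β x n = ∑ j ∈ Icc 1 n, x j := by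
  induction n with
  | zero => simp
  | succ n ih =>
    rw [sum_Icc_succ_top (by omega), sum_Icc_succ_top (by omega), ← ih, succ]
    ring

theorem sum_le (hβ0 : 0 ≤ β) (hβ1 : β < 1) (hx : ∀ j, 0 ≤ x j) :
    ∑ j ∈ Icc 1 n, decayedSum β x j ≤ (1 - β)⁻¹ * ∑ j ∈ Icc 1 n, x j := by
  rw [← one_sub_mul_sum_add β x n, le_inv_mul_iff₀ (sub_pos.2 hβ1)]
  nlinarith [nonneg (n := n) hβ0 hx]

/-- Since `ε + D (n + 1) ≥ β (ε + D n) + x (n + 1)`, this is `1 - t⁻¹ ≤ log t` at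
`t = (ε + D (n + 1)) / (β (ε + D n))`. -/
theorem div_le_log_sub_log (hβ0 : 0 < β) (hβ1 : β ≤ 1) (hε : 0 < ε) (hx : ∀ j, 0 ≤ x j)
    (n : ℕ) :
    x (n + 1) / (ε + decayedSum β x (n + 1))
      ≤ Real.log (ε + decayedSum β x (n + 1)) - Real.log (ε + decayedSum β x n) - Real.log β := by
  set u := ε + decayedSum β x n
  set v := ε + decayedSum β x (n + 1)
  have hu : 0 < u := by have := nonneg (n := n) hβ0.le hx; positivity
  have hv : β * u + x (n + 1) ≤ v := by
    simp only [u, v, succ]; nlinarith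
  have hv0 : 0 < v := by nlinarith [hx (n + 1)]
  calc x (n + 1) / v ≤ (v - β * u) / v := by gcongr; linarith
    _ = 1 - (v / (β * u))⁻¹ := by field_simp
    _ ≤ Real.log (v / (β * u)) := Real.one_sub_inv_le_log_of_pos (by positivity)
    _ = Real.log v - Real.log u - Real.log β := by
      rw [Real.log_div hv0.ne' (by positivity), Real.log_mul hβ0.ne' hu.ne']; ring

theorem sum_div_le_log (hβ0 : 0 < β) (hβ1 : β ≤ 1) (hε : 0 < ε) (hx : ∀ j, 0 ≤ x j) (n : ℕ) :
    ∑ j ∈ Icc 1 n, x j / (ε + decayedSum β x j)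
      ≤ Real.log (1 + decayedSum β x n / ε) - n * Real.log β := by
  rw [one_add_div hε.ne',
    Real.log_div (add_pos_of_pos_of_nonneg hε (nonneg hβ0.le hx)).ne' hε.ne']
  induction n with
  | zero => simp
  | succ n ih =>
    rw [sum_Icc_succ_top (by omega)]
    have := div_le_log_sub_log hβ0 hβ1 hε hx n
    push_cast
    linarith

theorem div_le_decayedSum_div {β₁ β₂ : ℝ} (hβ₁ : 0 ≤ β₁) (hβ₂0 : 0 < β₂) (hβ₂1 : β₂ ≤ 1)
    (hε : 0 < ε) (hx : ∀ j, 0 ≤ x j) (n : ℕ) :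
    decayedSum β₁ x n / (ε + decayedSum β₂ x n)
      ≤ decayedSum (β₁ / β₂) (fun j => x j / (ε + decayedSum β₂ x j)) n := by
  rw [decayedSum, sum_div]
  refine sum_le_sum fun j hj => ?_
  have hD := nonneg (n := j) hβ₂0.le hx
  calc β₁ ^ (n - j) * x j / (ε + decayedSum β₂ x n)
      ≤ β₁ ^ (n - j) * x j / (β₂ ^ (n - j) * (ε + decayedSum β₂ x j)) := by
        have := hx j
        gcongr
        exact pow_mul_const_add_le hβ₂0.le hβ₂1 hε.le hx (mem_Icc.1 hj).2
    _ = (β₁ / β₂) ^ (n - j) * (x j / (ε + decayedSum β₂ x j)) := by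
        rw [div_pow]; field_simp

theorem sum_sq_div_le_log {β₁ β₂ : ℝ} (hβ₁0 : 0 ≤ β₁) (hβ₁₂ : β₁ < β₂) (hβ₂1 : β₂ ≤ 1)
    (hε : 0 < ε) (a : ℕ → ℝ) (n : ℕ) :
    ∑ j ∈ Icc 1 n, decayedSum β₁ a j ^ 2 / (ε + decayedSum β₂ (a · ^ 2) j)
      ≤ (1 - β₁)⁻¹ * (1 - β₁ / β₂)⁻¹
          * (Real.log (1 + decayedSum β₂ (a · ^ 2) n / ε) - n * Real.log β₂) := by
  have hβ₂0 : 0 < β₂ := hβ₁0.trans_lt hβ₁₂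
  have hβ₁1 : β₁ < 1 := hβ₁₂.trans_le hβ₂1
  have hq1 : β₁ / β₂ < 1 := (div_lt_one hβ₂0).2 hβ₁₂
  have ha : ∀ j, 0 ≤ a j ^ 2 := fun j => sq_nonneg (a j)
  have hden : ∀ j, 0 < ε + decayedSum β₂ (a · ^ 2) j :=
    fun j => add_pos_of_pos_of_nonneg hε (nonneg hβ₂0.le ha)
  have h1β₁ : 0 < 1 - β₁ := sub_pos.2 hβ₁1
  rw [mul_assoc]
  calc _ ≤ ∑ j ∈ Icc 1 n,
          (1 - β₁)⁻¹ * (decayedSum β₁ (a · ^ 2) j / (ε + decayedSum β₂ (a · ^ 2) j)) := by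
        gcongr with j
        rw [← mul_div_assoc]
        have := hden j
        gcongr
        exact sq_le hβ₁0 hβ₁1
    _ ≤ ∑ j ∈ Icc 1 n, (1 - β₁)⁻¹ *
          decayedSum (β₁ / β₂) (fun j => a j ^ 2 / (ε + decayedSum β₂ (a · ^ 2) j)) j := by
        gcongr with j
        exact div_le_decayedSum_div hβ₁0 hβ₂0 hβ₂1 hε ha j
    _ ≤ (1 - β₁)⁻¹ * ((1 - β₁ / β₂)⁻¹ *
          ∑ j ∈ Icc 1 n, a j ^ 2 / (ε + decayedSum β₂ (a · ^ 2) j)) := by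
        rw [← mul_sum]
        gcongr
        exact sum_le (by positivity) hq1 fun j => div_nonneg (ha j) (hden j).le
    _ ≤ _ := by
        gcongr
        exact sum_div_le_log hβ₂0 hβ₂1 hε ha n

end decayedSum

/-- Lemma 5: sum of ratios of the square of a decayed sum and a decayed sum of squares. -/
theorem sum_ratios_sq_decayed
    (β₁ β₂ ε : ℝ) (hβ₁0 : 0 < β₁) (hβ₁₂ : β₁ < β₂) (hβ₂1 : β₂ ≤ 1) (hε : 0 < ε)
    (a : ℕ → ℝ)
    (b c : ℕ → ℝ)
    (hb : ∀ n, 1 ≤ n → b n = ∑ j ∈ Finset.Icc 1 n, β₂ ^ (n - j) * (a j) ^ 2)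
    (hc : ∀ n, 1 ≤ n → c n = ∑ j ∈ Finset.Icc 1 n, β₁ ^ (n - j) * a j)
    (n : ℕ) (hn : 1 ≤ n) :
    ∑ j ∈ Finset.Icc 1 n, (c j) ^ 2 / (ε + b j)
      ≤ (1 / ((1 - β₁) * (1 - β₁ / β₂)))
          * (Real.log (1 + b n / ε) - n * Real.log β₂) := by
  have hbc : ∑ j ∈ Icc 1 n, c j ^ 2 / (ε + b j)
      = ∑ j ∈ Icc 1 n, decayedSum β₁ a j ^ 2 / (ε + decayedSum β₂ (a · ^ 2) j) :=
    sum_congr rfl fun j hj => by rw [hb j (mem_Icc.1 hj).1, hc j (mem_Icc.1 hj).1]; rfl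
  have hbn : b n = decayedSum β₂ (a · ^ 2) n := hb n hn
  rw [hbc, hbn, one_div, mul_inv]
  exact decayedSum.sum_sq_div_le_log hβ₁0.le hβ₁₂ hβ₂1 hε a n
end

section
/- Energy bound for momentum-adaptive updates: Let 0 < β₁ < β₂ < 1, ε > 0, α > 0, R > 0, and N, T ∈ ℕ⁺. For each i ∈ {1,…,N} and t ∈ {1,…,T} let g_i^{(t)} ∈ ℝ with |g_i^{(t)}| ≤ R, and define m_i^{(0)} = v_i^{(0)} = 0, m_i^{(t)} = β₁ m_i^{(t−1)} + g_i^{(t)}, v_i^{(t)} = β₂ v_i^{(t−1)} + (g_i^{(t)})², α_t = α(1−β₁)√((1−β₂^t)/(1−β₂)), and e_i^{(t)} = −α_t m_i^{(t)}/√(ε + v_i^{(t)}). Then Σ_{t=1}^T Σ_{i=1}^N (e_i^{(t)})² ≤ ((1−β₁)α²N/((1−β₂)(1−β₁/β₂))) · [ ln(1 + R²/((1−β₂)ε)) − T·ln(β₂) ]. -/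
open Finset

private lemma v_nonneg (β₂ : ℝ) (hβ₂ : 0 ≤ β₂) (v g : ℕ → ℝ) (hv0 : v 0 = 0)
    (hv : ∀ t, v (t + 1) = β₂ * v t + (g (t + 1)) ^ 2) : ∀ t, 0 ≤ v t := by
  intro t
  induction t with
  | zero => simp [hv0]
  | succ n ih => rw [hv]; nlinarith [sq_nonneg (g (n + 1))]

private lemma aux_A (T : ℕ) (β₁ β₂ ε : ℝ)
    (hβ₁0 : 0 < β₁) (hβ₁₂ : β₁ < β₂) (hβ₂1 : β₂ < 1) (hε : 0 < ε)
    (m v g : ℕ → ℝ) (hm0 : m 0 = 0) (hv0 : v 0 = 0)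
    (hm : ∀ t, m (t + 1) = β₁ * m t + g (t + 1))
    (hv : ∀ t, v (t + 1) = β₂ * v t + (g (t + 1)) ^ 2) :
    ∑ t ∈ range T, (m (t + 1)) ^ 2 / (ε + v (t + 1))
      ≤ (1 / ((1 - β₁) * (1 - β₁ / β₂)))
          * ∑ t ∈ range T, (g (t + 1)) ^ 2 / (ε + v (t + 1)) := by
  have hβ₂0 : (0:ℝ) < β₂ := hβ₁0.trans hβ₁₂
  have h1β₁ : (0:ℝ) < 1 - β₁ := by linarith
  have hρ : β₁ / β₂ < 1 := (div_lt_one hβ₂0).2 hβ₁₂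
  have hρ0 : (0:ℝ) ≤ β₁ / β₂ := by positivity
  have hvnn := v_nonneg β₂ hβ₂0.le v g hv0 hv
  have hP : ∀ t, 0 < ε + v t := fun t => by have := hvnn t; linarith
  -- key one-step inequality
  have hstep : ∀ t, (m (t + 1)) ^ 2 / (ε + v (t + 1))
      ≤ (β₁ / β₂) * ((m t) ^ 2 / (ε + v t))
        + ((g (t + 1)) ^ 2 / (ε + v (t + 1))) / (1 - β₁) := by
    intro t
    have hQβ : β₂ * (ε + v t) ≤ ε + v (t + 1) := by
      rw [hv]; nlinarith [sq_nonneg (g (t + 1)), hvnn t]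
    have hm2 : (m (t + 1)) ^ 2 ≤ β₁ * (m t) ^ 2 + (g (t + 1)) ^ 2 / (1 - β₁) := by
      have h : (m (t + 1)) ^ 2 - β₁ * (m t) ^ 2 ≤ (g (t + 1)) ^ 2 / (1 - β₁) := by
        rw [le_div_iff₀ h1β₁, hm]
        nlinarith [mul_nonneg hβ₁0.le (sq_nonneg ((1 - β₁) * m t - g (t + 1)))]
      linarith
    calc (m (t + 1)) ^ 2 / (ε + v (t + 1))
        ≤ (β₁ * (m t) ^ 2 + (g (t + 1)) ^ 2 / (1 - β₁)) / (ε + v (t + 1)) := by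
          gcongr
          exact (hP (t + 1)).le
      _ = β₁ * (m t) ^ 2 / (ε + v (t + 1))
            + ((g (t + 1)) ^ 2 / (ε + v (t + 1))) / (1 - β₁) := by ring
      _ ≤ β₁ * (m t) ^ 2 / (β₂ * (ε + v t))
            + ((g (t + 1)) ^ 2 / (ε + v (t + 1))) / (1 - β₁) := by
          have hd : β₁ * (m t) ^ 2 / (ε + v (t + 1)) ≤ β₁ * (m t) ^ 2 / (β₂ * (ε + v t)) := by
            gcongr
            all_goals first
              | exact hQβ
              | exact mul_pos hβ₂0 (hP t)
              | positivity
          linarith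
      _ = (β₁ / β₂) * ((m t) ^ 2 / (ε + v t))
            + ((g (t + 1)) ^ 2 / (ε + v (t + 1))) / (1 - β₁) := by
          rw [mul_div_mul_comm]
  set S := ∑ t ∈ range T, (m (t + 1)) ^ 2 / (ε + v (t + 1)) with hS
  set D := ∑ t ∈ range T, (g (t + 1)) ^ 2 / (ε + v (t + 1)) with hD
  have hsum : S ≤ (β₁ / β₂) * (∑ t ∈ range T, (m t) ^ 2 / (ε + v t)) + D / (1 - β₁) := by
    rw [hS, hD, Finset.mul_sum, Finset.sum_div, ← Finset.sum_add_distrib]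
    exact Finset.sum_le_sum fun t _ => hstep t
  have hshift : ∑ t ∈ range T, (m t) ^ 2 / (ε + v t) ≤ S := by
    rw [hS]
    cases T with
    | zero => simp
    | succ k =>
      rw [Finset.sum_range_succ' (fun t => (m t) ^ 2 / (ε + v t)) k]
      rw [hm0, hv0]
      simp only [ne_eq, zero_pow, add_zero]
      norm_num
      refine Finset.sum_le_sum_of_subset_of_nonneg
        (Finset.range_subset_range.2 (Nat.le_succ k)) (fun t _ _ => div_nonneg (sq_nonneg _) (hP _).le)
  have h1 : (β₁ / β₂) * (∑ t ∈ range T, (m t) ^ 2 / (ε + v t)) ≤ (β₁ / β₂) * S :=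
    mul_le_mul_of_nonneg_left hshift hρ0
  have h3 : S ≤ (D / (1 - β₁)) / (1 - β₁ / β₂) := by
    rw [le_div_iff₀ (by linarith : (0:ℝ) < 1 - β₁ / β₂)]
    have hexp : S * (1 - β₁ / β₂) = S - (β₁ / β₂) * S := by ring
    rw [hexp]
    linarith
  calc S ≤ (D / (1 - β₁)) / (1 - β₁ / β₂) := h3
    _ = (1 / ((1 - β₁) * (1 - β₁ / β₂))) * D := by
      rw [div_div, one_div, inv_mul_eq_div]

private lemma aux_B (T : ℕ) (β₂ ε R : ℝ)
    (hβ₂0 : 0 < β₂) (hβ₂1 : β₂ < 1) (hε : 0 < ε) (hR : 0 < R)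
    (v g : ℕ → ℝ) (hv0 : v 0 = 0)
    (hv : ∀ t, v (t + 1) = β₂ * v t + (g (t + 1)) ^ 2)
    (hg : ∀ t, t < T → |g (t + 1)| ≤ R) :
    ∑ t ∈ range T, (g (t + 1)) ^ 2 / (ε + v (t + 1))
      ≤ Real.log (1 + R ^ 2 / ((1 - β₂) * ε)) - T * Real.log β₂ := by
  have h1β₂ : (0:ℝ) < 1 - β₂ := by linarith
  have hvnn := v_nonneg β₂ hβ₂0.le v g hv0 hv
  have hP : ∀ t, 0 < ε + v t := fun t => by have := hvnn t; linarith
  have hstep : ∀ t, (g (t + 1)) ^ 2 / (ε + v (t + 1))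
      ≤ (Real.log (ε + v (t + 1)) - Real.log (ε + v t)) - Real.log β₂ := by
    intro t
    have hQ := hP (t + 1)
    have hPt := hP t
    have h1 : (g (t + 1)) ^ 2 / (ε + v (t + 1))
        ≤ 1 - β₂ * (ε + v t) / (ε + v (t + 1)) := by
      have hnum : (g (t + 1)) ^ 2 ≤ (ε + v (t + 1)) - β₂ * (ε + v t) := by
        rw [hv]; nlinarith
      have : (g (t + 1)) ^ 2 / (ε + v (t + 1))
          ≤ ((ε + v (t + 1)) - β₂ * (ε + v t)) / (ε + v (t + 1)) := by gcongr
      calc (g (t + 1)) ^ 2 / (ε + v (t + 1))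
          ≤ ((ε + v (t + 1)) - β₂ * (ε + v t)) / (ε + v (t + 1)) := this
        _ = 1 - β₂ * (ε + v t) / (ε + v (t + 1)) := by field_simp
    have hx : (0:ℝ) < β₂ * (ε + v t) / (ε + v (t + 1)) := by positivity
    have hlog1 := Real.log_le_sub_one_of_pos hx
    have hlog2 : Real.log (β₂ * (ε + v t) / (ε + v (t + 1)))
        = Real.log β₂ + Real.log (ε + v t) - Real.log (ε + v (t + 1)) := by
      rw [Real.log_div (by positivity) hQ.ne', Real.log_mul hβ₂0.ne' hPt.ne']
    linarith
  have hvT : ∀ t, t ≤ T → v t ≤ R ^ 2 / (1 - β₂) := by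
    intro t
    induction t with
    | zero => intro _; rw [hv0]; positivity
    | succ n ih =>
      intro hn
      have hgn : |g (n + 1)| ≤ R := hg n (by omega)
      have hg2 : (g (n + 1)) ^ 2 ≤ R ^ 2 := by
        rw [← sq_abs]; exact pow_le_pow_left₀ (abs_nonneg _) hgn 2
      have hvn := ih (by omega)
      rw [hv, le_div_iff₀ h1β₂]
      rw [le_div_iff₀ h1β₂] at hvn
      nlinarith [hvnn n, mul_le_mul_of_nonneg_left hvn hβ₂0.le]
  calc ∑ t ∈ range T, (g (t + 1)) ^ 2 / (ε + v (t + 1))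
      ≤ ∑ t ∈ range T, ((Real.log (ε + v (t + 1)) - Real.log (ε + v t)) - Real.log β₂) :=
        Finset.sum_le_sum fun t _ => hstep t
    _ = (Real.log (ε + v T) - Real.log (ε + v 0)) - T * Real.log β₂ := by
        rw [Finset.sum_sub_distrib, Finset.sum_range_sub (fun t => Real.log (ε + v t)),
          Finset.sum_const, Finset.card_range, nsmul_eq_mul]
    _ ≤ Real.log (1 + R ^ 2 / ((1 - β₂) * ε)) - T * Real.log β₂ := by
        have hvT' := hvT T le_rfl
        have hmono : Real.log (ε + v T) ≤ Real.log (ε + R ^ 2 / (1 - β₂)) :=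
          Real.log_le_log (hP T) (by linarith)
        have heq : Real.log (1 + R ^ 2 / ((1 - β₂) * ε))
            = Real.log (ε + R ^ 2 / (1 - β₂)) - Real.log ε := by
          rw [← Real.log_div (by positivity) hε.ne']
          congr 1
          field_simp
        rw [hv0, add_zero]
        linarith

/-- Energy bound for momentum-adaptive updates. -/
theorem energy_bound_momentum_adaptive
    (N T : ℕ) (hN : 0 < N) (hT : 0 < T)
    (β₁ β₂ ε α R : ℝ)
    (hβ₁0 : 0 < β₁) (hβ₁₂ : β₁ < β₂) (hβ₂1 : β₂ < 1)
    (hε : 0 < ε) (hα : 0 < α) (hR : 0 < R)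
    (g : ℕ → Fin N → ℝ) (hg : ∀ t i, 1 ≤ t → t ≤ T → |g t i| ≤ R)
    (m v : ℕ → Fin N → ℝ)
    (hm0 : ∀ i, m 0 i = 0) (hv0 : ∀ i, v 0 i = 0)
    (hm : ∀ t i, m (t + 1) i = β₁ * m t i + g (t + 1) i)
    (hv : ∀ t i, v (t + 1) i = β₂ * v t i + (g (t + 1) i) ^ 2)
    (e : ℕ → Fin N → ℝ)
    (he : ∀ t i, e (t + 1) i
        = -(α * (1 - β₁) * Real.sqrt ((1 - β₂ ^ (t + 1)) / (1 - β₂))) * m (t + 1) i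
            / Real.sqrt (ε + v (t + 1) i)) :
    ∑ t ∈ Finset.Icc 1 T, ∑ i, (e t i) ^ 2
      ≤ ((1 - β₁) * α ^ 2 * N / ((1 - β₂) * (1 - β₁ / β₂)))
          * (Real.log (1 + R ^ 2 / ((1 - β₂) * ε)) - T * Real.log β₂) := by
  have hβ₂0 : (0:ℝ) < β₂ := hβ₁0.trans hβ₁₂
  have h1β₁ : (0:ℝ) < 1 - β₁ := by linarith
  have h1β₂ : (0:ℝ) < 1 - β₂ := by linarith
  have hρ : β₁ / β₂ < 1 := (div_lt_one hβ₂0).2 hβ₁₂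
  have h1ρ : (0:ℝ) < 1 - β₁ / β₂ := by linarith
  set L := Real.log (1 + R ^ 2 / ((1 - β₂) * ε)) - T * Real.log β₂ with hL
  set C := (1 - β₁) * α ^ 2 / ((1 - β₂) * (1 - β₁ / β₂)) with hC
  -- per-coordinate bound
  have key : ∀ i : Fin N, ∑ t ∈ range T, (e (t + 1) i) ^ 2 ≤ C * L := by
    intro i
    have hvnn := v_nonneg β₂ hβ₂0.le (fun t => v t i) (fun t => g t i) (hv0 i)
      (fun t => hv t i)
    have hP : ∀ t, 0 < ε + v t i := fun t => by have := hvnn t; linarith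
    have hterm : ∀ t, (e (t + 1) i) ^ 2
        ≤ ((α * (1 - β₁)) ^ 2 / (1 - β₂)) * ((m (t + 1) i) ^ 2 / (ε + v (t + 1) i)) := by
      intro t
      have hβpow : β₂ ^ (t + 1) ≤ 1 := pow_le_one₀ hβ₂0.le hβ₂1.le
      have hβpow0 : 0 < β₂ ^ (t + 1) := pow_pos hβ₂0 _
      have hs : (Real.sqrt ((1 - β₂ ^ (t + 1)) / (1 - β₂))) ^ 2
          = (1 - β₂ ^ (t + 1)) / (1 - β₂) :=
        Real.sq_sqrt (div_nonneg (by linarith) h1β₂.le)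
      have hq : (Real.sqrt (ε + v (t + 1) i)) ^ 2 = ε + v (t + 1) i :=
        Real.sq_sqrt (hP (t + 1)).le
      have heq : (e (t + 1) i) ^ 2
          = (α * (1 - β₁)) ^ 2 * ((1 - β₂ ^ (t + 1)) / (1 - β₂))
              * ((m (t + 1) i) ^ 2 / (ε + v (t + 1) i)) := by
        rw [he, div_pow, hq,
          show (-(α * (1 - β₁) * Real.sqrt ((1 - β₂ ^ (t + 1)) / (1 - β₂))) * m (t + 1) i) ^ 2
            = (α * (1 - β₁)) ^ 2 * (Real.sqrt ((1 - β₂ ^ (t + 1)) / (1 - β₂))) ^ 2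
                * (m (t + 1) i) ^ 2 by ring, hs]
        ring
      rw [heq]
      have hfrac : (1 - β₂ ^ (t + 1)) / (1 - β₂) ≤ 1 / (1 - β₂) := by
        gcongr
        linarith
      have hmv : 0 ≤ (m (t + 1) i) ^ 2 / (ε + v (t + 1) i) :=
        div_nonneg (sq_nonneg _) (hP _).le
      calc (α * (1 - β₁)) ^ 2 * ((1 - β₂ ^ (t + 1)) / (1 - β₂))
              * ((m (t + 1) i) ^ 2 / (ε + v (t + 1) i))
          ≤ (α * (1 - β₁)) ^ 2 * (1 / (1 - β₂))
              * ((m (t + 1) i) ^ 2 / (ε + v (t + 1) i)) := by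
            gcongr
        _ = ((α * (1 - β₁)) ^ 2 / (1 - β₂)) * ((m (t + 1) i) ^ 2 / (ε + v (t + 1) i)) := by
            ring
    have hA := aux_A T β₁ β₂ ε hβ₁0 hβ₁₂ hβ₂1 hε
      (fun t => m t i) (fun t => v t i) (fun t => g t i)
      (hm0 i) (hv0 i) (fun t => hm t i) (fun t => hv t i)
    have hB := aux_B T β₂ ε R hβ₂0 hβ₂1 hε hR
      (fun t => v t i) (fun t => g t i) (hv0 i) (fun t => hv t i)
      (fun t ht => hg (t + 1) i (by omega) (by omega))
    calc ∑ t ∈ range T, (e (t + 1) i) ^ 2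
        ≤ ∑ t ∈ range T, ((α * (1 - β₁)) ^ 2 / (1 - β₂))
            * ((m (t + 1) i) ^ 2 / (ε + v (t + 1) i)) :=
          Finset.sum_le_sum fun t _ => hterm t
      _ = ((α * (1 - β₁)) ^ 2 / (1 - β₂))
            * ∑ t ∈ range T, (m (t + 1) i) ^ 2 / (ε + v (t + 1) i) := by
          rw [Finset.mul_sum]
      _ ≤ ((α * (1 - β₁)) ^ 2 / (1 - β₂))
            * ((1 / ((1 - β₁) * (1 - β₁ / β₂)))
                * ∑ t ∈ range T, (g (t + 1) i) ^ 2 / (ε + v (t + 1) i)) := by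
          exact mul_le_mul_of_nonneg_left hA (div_nonneg (sq_nonneg _) h1β₂.le)
      _ ≤ ((α * (1 - β₁)) ^ 2 / (1 - β₂)) * ((1 / ((1 - β₁) * (1 - β₁ / β₂))) * L) := by
          refine mul_le_mul_of_nonneg_left ?_ (div_nonneg (sq_nonneg _) h1β₂.le)
          refine mul_le_mul_of_nonneg_left hB ?_
          have := mul_pos h1β₁ h1ρ
          positivity
      _ = C * L := by
          rw [hC]
          have hb : 1 - β₁ / β₂ = (β₂ - β₁) / β₂ := by field_simp
          rw [hb]
          have h1 : (1 - β₁) ≠ 0 := h1β₁.ne'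
          have h2 : (1 - β₂) ≠ 0 := h1β₂.ne'
          have h3 : (β₂ - β₁) ≠ 0 := by linarith
          have h4 : β₂ ≠ 0 := hβ₂0.ne'
          field_simp
  -- assemble
  have hIcc : ∑ t ∈ Finset.Icc 1 T, ∑ i, (e t i) ^ 2
      = ∑ t ∈ range T, ∑ i, (e (t + 1) i) ^ 2 := by
    rw [show Finset.Icc 1 T = Finset.Ico 1 (T + 1) from by rw [Finset.Ico_add_one_right_eq_Icc]]
    rw [Finset.sum_Ico_eq_sum_range]
    simp only [Nat.add_sub_cancel]
    exact Finset.sum_congr rfl fun t _ => by rw [Nat.add_comm 1 t]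
  rw [hIcc, Finset.sum_comm]
  calc ∑ i : Fin N, ∑ t ∈ range T, (e (t + 1) i) ^ 2
      ≤ ∑ _i : Fin N, C * L := Finset.sum_le_sum fun i _ => key i
    _ = N * (C * L) := by rw [Finset.sum_const, Finset.card_univ, Fintype.card_fin,
        nsmul_eq_mul]
    _ = ((1 - β₁) * α ^ 2 * N / ((1 - β₂) * (1 - β₁ / β₂))) * L := by
        rw [hC]; ring
end
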